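/- arXiv:math/0502212 — 2 statements merged into one kernel-verified Lean document; each statement's English description precedes it below -/
import Mathlib

section
/- Let K be a left noetherian ring with unit and let C0 denote the category whose objects are the finitely generated free left K-modules and whose morphisms are the K-linear maps. Then every automorphism φ of C0 is semi-inner: there exist a ring automorphism σ of K and, for every object A of C0, a σ-semilinear bijection s_A : A → φ(A), such that φ(ν) = s_B ∘ ν ∘ s_A^{-1} for every K-linear map ν : A → B. -/
open CategoryTheory

universe u

/-- The category `C0` of finitely generated free left `K`-modules, realized as the full
subcategory of `ModuleCat K` on the modules that are finite and free. -/
def FreeModCat (K : Type u) [Ring K] : Type (u + 1) :=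
  CategoryTheory.ObjectProperty.FullSubcategory
    (fun M : ModuleCat.{u} K => Module.Finite K M ∧ Module.Free K M)

instance (K : Type u) [Ring K] : Category (FreeModCat K) :=
  CategoryTheory.ObjectProperty.FullSubcategory.category _

/-!
An automorphism `φ` of the category is an equivalence, and since the category has binary
biproducts it is additive. Additivity transports bases, seen as biproduct decompositions into
copies of `K`, so `K ≅ φ⁻¹(φ K) ≅ (φ⁻¹ K)^m` with `m` the rank of `φ K`; as nontrivial
noetherian rings satisfy the strong rank condition, `m = 1`, i.e. there is `θ : K ≅ φ K`.
Every element `a` of `A` is the value at `1` of a unique map `K → A`, so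
`s A a := φ(1 ↦ a)(θ 1)` is a bijection `A → φ A`, natural in `A`. On `K` itself, right
multiplication by `l` goes to a map sending `θ 1` to `σ l • θ 1`; this defines the ring
automorphism `σ` and makes every `s A` `σ`-semilinear.
-/

open Limits

noncomputable section

namespace FreeModCat
variable {K : Type u} [Ring K]

instance : Preadditive (FreeModCat K) :=
  inferInstanceAs (Preadditive (ObjectProperty.FullSubcategory _))

instance (A : FreeModCat K) : Module.Finite K A.obj := A.property.1
instance (A : FreeModCat K) : Module.Free K A.obj := A.property.2

abbrev ofHom {A B : FreeModCat K} (f : A.obj →ₗ[K] B.obj) : A ⟶ B :=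
  ObjectProperty.homMk (ModuleCat.ofHom f)

@[ext]
lemma hom_ext {A B : FreeModCat K} {f g : A ⟶ B} (h : ∀ a, f.hom a = g.hom a) : f = g :=
  ObjectProperty.hom_ext _ (ModuleCat.hom_ext (LinearMap.ext h))

abbrev toModuleCat : FreeModCat K ⥤ ModuleCat K := ObjectProperty.ι _

instance : (toModuleCat (K := K)).Additive :=
  Functor.fullSubcategoryInclusion_additive _

lemma sum_hom_apply {A B : FreeModCat K} {ι : Type*} (s : Finset ι) (f : ι → (A ⟶ B))
    (a : A.obj) : (∑ i ∈ s, f i).hom a = ∑ i ∈ s, (f i).hom a := by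
  change (toModuleCat.map (∑ i ∈ s, f i)).hom a = _
  rw [Functor.map_sum, ModuleCat.hom_sum, LinearMap.sum_apply]
  rfl

def prodBinaryBicone (A B : FreeModCat K) : BinaryBicone A B where
  pt := ⟨ModuleCat.of K (A.obj × B.obj), inferInstance, inferInstance⟩
  fst := ofHom (LinearMap.fst K A.obj B.obj)
  snd := ofHom (LinearMap.snd K A.obj B.obj)
  inl := ofHom (LinearMap.inl K A.obj B.obj)
  inr := ofHom (LinearMap.inr K A.obj B.obj)
  inl_fst := by ext; rfl
  inl_snd := by ext; rfl
  inr_fst := by ext; rfl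
  inr_snd := by ext; rfl

instance : HasBinaryBiproducts (FreeModCat K) where
  has_binary_biproduct A B := hasBinaryBiproduct_of_total (prodBinaryBicone A B) <| by
    ext ⟨a, b⟩
    change ((a, 0) + (0, b) : A.obj × B.obj) = (a, b)
    simp

abbrev regular (K : Type u) [Ring K] : FreeModCat K :=
  ⟨ModuleCat.of K K, Module.Finite.self K, Module.Free.self K⟩

def homRegularEquiv (A : FreeModCat K) : (regular K ⟶ A) ≃ A.obj where
  toFun f := f.hom (1 : K)
  invFun a := ofHom (LinearMap.toSpanSingleton K A.obj a)
  left_inv f := by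
    ext x
    change x • f.hom (1 : K) = f.hom x
    rw [← map_smul, smul_eq_mul, mul_one]
  right_inv a := one_smul K a

lemma homRegularEquiv_symm_add (A : FreeModCat K) (a a' : A.obj) :
    (homRegularEquiv A).symm (a + a') =
      (homRegularEquiv A).symm a + (homRegularEquiv A).symm a' := by
  ext x
  exact smul_add x a a'

lemma homRegularEquiv_symm_smul (A : FreeModCat K) (l : K) (a : A.obj) :
    (homRegularEquiv A).symm (l • a) =
      (homRegularEquiv (regular K)).symm l ≫ (homRegularEquiv A).symm a := by
  ext x
  exact (mul_smul x l a).symm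

lemma homRegularEquiv_symm_apply {A B : FreeModCat K} (f : A ⟶ B) (a : A.obj) :
    (homRegularEquiv B).symm (f.hom a) = (homRegularEquiv A).symm a ≫ f := by
  ext x
  exact (map_smul f.hom.hom x a).symm

def linearEquivOfIso {A B : FreeModCat K} (e : A ≅ B) : A.obj ≃ₗ[K] B.obj :=
  (toModuleCat.mapIso e).toLinearEquiv

def isoOfLinearEquiv {A B : FreeModCat K} (e : A.obj ≃ₗ[K] B.obj) : A ≅ B :=
  ObjectProperty.isoMk _ e.toModuleIso

/-- `φ ν = s B ∘ ν ∘ (s A)⁻¹` is stated in the equivalent form `φ ν ∘ s A = s B ∘ ν`. -/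
def IsSemiInner (φ : FreeModCat K ⥤ FreeModCat K) : Prop :=
  ∃ σ : K ≃+* K, ∃ s : ∀ A : FreeModCat K, A.obj → (φ.obj A).obj,
      (∀ A : FreeModCat K, Function.Bijective (s A)) ∧
      (∀ (A : FreeModCat K) (a a' : A.obj), s A (a + a') = s A a + s A a') ∧
      (∀ (A : FreeModCat K) (l : K) (a : A.obj), s A (l • a) = σ l • s A a) ∧
      (∀ (A B : FreeModCat K) (ν : A ⟶ B) (a : A.obj), (φ.map ν).hom (s A a) = s B (ν.hom a))

section SemiInner

variable (F : FreeModCat K ⥤ FreeModCat K) [F.Full] [F.Faithful]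
  (θ : regular K ≅ F.obj (regular K))

def semiInnerEquiv (A : FreeModCat K) : A.obj ≃ (F.obj A).obj :=
  (homRegularEquiv A).symm.trans <| (Functor.FullyFaithful.ofFullyFaithful F).homEquiv.trans <|
    (θ.homCongr (Iso.refl _)).symm.trans (homRegularEquiv (F.obj A))

lemma semiInnerEquiv_apply (A : FreeModCat K) (a : A.obj) :
    semiInnerEquiv F θ A a = (F.map ((homRegularEquiv A).symm a)).hom (θ.hom.hom (1 : K)) :=
  rfl

lemma map_semiInnerEquiv {A B : FreeModCat K} (f : A ⟶ B) (a : A.obj) :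
    (F.map f).hom (semiInnerEquiv F θ A a) = semiInnerEquiv F θ B (f.hom a) := by
  rw [semiInnerEquiv_apply, semiInnerEquiv_apply, homRegularEquiv_symm_apply, F.map_comp]
  rfl

/-- `σ l` is the coordinate of `F (· * l)` applied to the generator `θ 1` of `F K`. -/
def semiInnerScalar : K ≃ K :=
  (semiInnerEquiv F θ (regular K)).trans (linearEquivOfIso θ).symm.toEquiv

lemma semiInnerEquiv_regular (l : K) :
    semiInnerEquiv F θ (regular K) l = semiInnerScalar F θ l • θ.hom.hom (1 : K) := calc
  _ = θ.hom.hom (semiInnerScalar F θ l) := ((linearEquivOfIso θ).apply_symm_apply _).symm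
  _ = _ := by rw [← map_smul, smul_eq_mul, mul_one]

lemma semiInnerEquiv_smul (A : FreeModCat K) (l : K) (a : A.obj) :
    semiInnerEquiv F θ A (l • a) = semiInnerScalar F θ l • semiInnerEquiv F θ A a := by
  rw [semiInnerEquiv_apply, homRegularEquiv_symm_smul, F.map_comp]
  change (F.map _).hom (semiInnerEquiv F θ (regular K) l) = _
  rw [semiInnerEquiv_regular, map_smul]
  rfl

variable [F.Additive]

lemma semiInnerEquiv_add (A : FreeModCat K) (a a' : A.obj) :
    semiInnerEquiv F θ A (a + a') = semiInnerEquiv F θ A a + semiInnerEquiv F θ A a' := by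
  rw [semiInnerEquiv_apply, homRegularEquiv_symm_add, F.map_add]
  rfl

def semiInnerRingEquiv : K ≃+* K where
  __ := semiInnerScalar F θ
  map_mul' l l' := by
    change (linearEquivOfIso θ).symm (semiInnerEquiv F θ _ (l • l')) = _
    rw [semiInnerEquiv_smul, map_smul]
    rfl
  map_add' l l' := by
    change (linearEquivOfIso θ).symm (semiInnerEquiv F θ _ (l + l')) = _
    rw [semiInnerEquiv_add, map_add]
    rfl

end SemiInner

theorem isSemiInner_of_iso_regular (F : FreeModCat K ⥤ FreeModCat K) [F.Full] [F.Faithful]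
    [F.Additive] (θ : regular K ≅ F.obj (regular K)) : IsSemiInner F :=
  ⟨semiInnerRingEquiv F θ, fun A => semiInnerEquiv F θ A,
    fun A => (semiInnerEquiv F θ A).bijective,
    semiInnerEquiv_add F θ, semiInnerEquiv_smul F θ, fun _ _ => map_semiInnerEquiv F θ⟩

def basisBicone {ι : Type} [DecidableEq ι] {A : FreeModCat K} (b : Module.Basis ι K A.obj) :
    Bicone (fun _ : ι => regular K) where
  pt := A
  π i := ofHom (b.coord i)
  ι i := ofHom (LinearMap.toSpanSingleton K A.obj (b i))
  ι_π i j := by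
    split_ifs with h
    · subst h
      ext (x : K)
      change b.coord i (x • b i) = x
      simp
    · ext (x : K)
      change b.coord j (x • b i) = 0
      simp [h]

def isBilimitBasisBicone {ι : Type} [Fintype ι] [DecidableEq ι] {A : FreeModCat K}
    (b : Module.Basis ι K A.obj) : (basisBicone b).IsBilimit :=
  isBilimitOfTotal _ <| by
    ext a
    rw [sum_hom_apply]
    exact b.sum_repr a

def linearEquivPiOfIsBilimit {ι : Type} [Finite ι] {G : FreeModCat K}
    {c : Bicone (fun _ : ι => G)} (hc : c.IsBilimit) : c.pt.obj ≃ₗ[K] (ι → G.obj) :=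
  (biproduct.uniqueUpToIso _ (isBilimitOfPreserves toModuleCat hc) ≪≫
    ModuleCat.biproductIsoPi _).toLinearEquiv

theorem nonempty_iso_regular [IsNoetherianRing K] (e : FreeModCat K ≌ FreeModCat K)
    [e.functor.Additive] : Nonempty (regular K ≅ e.functor.obj (regular K)) := by
  rcases subsingleton_or_nontrivial K with _ | _
  · have := Module.subsingleton K (e.functor.obj (regular K)).obj
    exact ⟨isoOfLinearEquiv (LinearEquiv.ofSubsingleton _ _)⟩
  let m := Module.finrank K (e.functor.obj (regular K)).obj
  have f : K ≃ₗ[K] (Fin m → (e.inverse.obj (regular K)).obj) :=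
    linearEquivOfIso (e.unitIso.app (regular K)) ≪≫ₗ linearEquivPiOfIsBilimit
      (isBilimitOfPreserves e.inverse (isBilimitBasisBicone (Module.finBasis K _)))
  have hrank := f.finrank_eq
  rw [Module.finrank_self, Module.finrank_pi_fintype] at hrank
  simp only [Finset.sum_const, Finset.card_univ, Fintype.card_fin, smul_eq_mul] at hrank
  obtain ⟨g⟩ := Module.nonempty_linearEquiv_of_finrank_eq_one
    (Nat.eq_one_of_mul_eq_one_right hrank.symm)
  exact ⟨isoOfLinearEquiv g⟩

theorem isSemiInner_of_equivalence [IsNoetherianRing K] (e : FreeModCat K ≌ FreeModCat K) :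
    IsSemiInner e.functor := by
  have : e.functor.Additive := e.functor.additive_of_preserves_binary_products
  obtain ⟨θ⟩ := nonempty_iso_regular e
  exact isSemiInner_of_iso_regular e.functor θ

end FreeModCat

end

/-- Every automorphism `φ` of the category of finitely generated free left
modules over a left noetherian ring `K` is semi-inner: there are a ring automorphism `σ` of `K`
and, for each object `A`, a `σ`-semilinear bijection `s A : A → φ(A)` such that
`φ(ν) = s B ∘ ν ∘ (s A)⁻¹` for every `K`-linear map `ν : A ⟶ B`. -/
theorem automorphism_of_freeModCat_is_semiInner
    (K : Type u) [Ring K] [IsNoetherianRing K]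
    (φ ψ : FreeModCat K ⥤ FreeModCat K)
    (hφψ : φ ⋙ ψ = 𝟭 (FreeModCat K)) (hψφ : ψ ⋙ φ = 𝟭 (FreeModCat K)) :
    ∃ σ : K ≃+* K, ∃ s : ∀ A : FreeModCat K, A.obj → (φ.obj A).obj,
      (∀ A : FreeModCat K, Function.Bijective (s A)) ∧
      (∀ (A : FreeModCat K) (a a' : A.obj), s A (a + a') = s A a + s A a') ∧
      (∀ (A : FreeModCat K) (l : K) (a : A.obj), s A (l • a) = σ l • s A a) ∧
      (∀ (A B : FreeModCat K) (ν : A ⟶ B) (a : A.obj),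
        (show (φ.obj A).obj ⟶ (φ.obj B).obj from (φ.map ν).hom) (s A a)
          = s B ((show A.obj ⟶ B.obj from ν.hom) a)) :=
  FreeModCat.isSemiInner_of_equivalence
    (CategoryTheory.Equivalence.mk φ ψ (eqToIso hφψ.symm) (eqToIso hψφ))
end

section
/- Let K be an infinite field, W the free Lie algebra over K on two generators x and y, and T a characteristic automorphism of End(W) which acts identically on the subsemigroup of L-endomorphisms (T(σ) = σ for every L-endomorphism σ). Then there exists λ ∈ K, λ ≠ 0, such that T(σ) = τ_λ^{-1} ∘ σ ∘ τ_λ for every σ ∈ End(W). -/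
noncomputable section

open FreeLieAlgebra

/-- The free Lie algebra over `K` on the two generators `x = of K 0` and `y = of K 1`. -/
abbrev LieW (K : Type*) [Field K] := FreeLieAlgebra K (Fin 2)

/-- The monoid (under composition) of Lie algebra endomorphisms of the free Lie algebra on two
generators. -/
abbrev LieEnd (K : Type*) [Field K] := LieW K →ₗ⁅K⁆ LieW K

instance (K : Type*) [Field K] : Monoid (LieEnd K) where
  mul f g := f.comp g
  one := LieHom.id
  mul_assoc f g h := rfl
  one_mul f := by ext w; rfl
  mul_one f := by ext w; rfl

@[simp] theorem LieEnd.mul_def {K : Type*} [Field K] (f g : LieEnd K) : f * g = f.comp g := rfl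
@[simp] theorem LieEnd.one_def {K : Type*} [Field K] : (1 : LieEnd K) = LieHom.id := rfl

/-- The endomorphism `τ_λ` of the free Lie algebra on two generators, determined by
`τ_λ x = λ • x` and `τ_λ y = λ • y`.  For `λ ≠ 0` it is an automorphism. -/
def lieTau (K : Type*) [Field K] (l : K) : LieEnd K :=
  FreeLieAlgebra.lift K fun i => l • FreeLieAlgebra.of K i

/-- An endomorphism `σ` of the free Lie algebra `W` on the two generators `x, y` is an
`L`-endomorphism if `σ x` and `σ y` lie in the `K`-linear span of `x` and `y`. -/
def IsLEndo {K : Type*} [Field K] (σ : LieEnd K) : Prop :=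
  ∀ i : Fin 2, σ (FreeLieAlgebra.of K i) ∈
    Submodule.span K ({FreeLieAlgebra.of K 0, FreeLieAlgebra.of K 1} : Set (LieW K))

/-- A monoid automorphism `T` of `End W` is characteristic if there is a multiplicative
homomorphism `χ : Aut W →* K*` with `T ξ = τ_{χ ξ} ∘ ξ` for every automorphism `ξ` of `W`. -/
def IsCharacteristic {K : Type*} [Field K] (T : MulAut (LieEnd K)) : Prop :=
  ∃ χ : (LieEnd K)ˣ →* Kˣ, ∀ ξ : (LieEnd K)ˣ, T ↑ξ = lieTau K ↑(χ ξ) * ↑ξ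

/-!
Put `t w := T(x ↦ w, y ↦ 0)(x)`. Since `T` is multiplicative and fixes the
`L`-endomorphism `(x ↦ x, y ↦ 0)`, it maps `(x ↦ w, y ↦ 0)` to `(x ↦ t w, y ↦ 0)`;
composing with an arbitrary `σ` gives `T σ (t w) = t (σ w)`. As `t` fixes the span of `x`
and `y`, this makes `t` linear and `T σ = t ∘ σ` on the generators. Applied to the diagonal
`L`-endomorphisms `(x ↦ μx, y ↦ νy)` it shows that `t[x,y]` is homogeneous of bidegree
`(1,1)`; comparing coefficients of polynomials in `μ`, `ν` (here `K` must be infinite) gives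
`t[x,y] = c[x,y]`, with `c ≠ 0` because `t` is injective. Then `t[u,v] = c[t u, t v]`, so
`c • t` is the Lie endomorphism `τ_c`, and `T σ = τ_c ∘ σ ∘ τ_c⁻¹`.
-/

theorem Finsupp.eq_zero_of_forall_sum_pow_smul_eq_zero {K V : Type*} [Field K] [Infinite K]
    [AddCommGroup V] [Module K V] (f : ℕ →₀ V)
    (h : ∀ μ : K, f.sum (fun n v => μ ^ n • v) = 0) : f = 0 := by
  ext n
  refine (Module.forall_dual_apply_eq_zero_iff K _).1 fun φ => ?_
  let p : Polynomial K := f.sum fun k v => Polynomial.C (φ v) * Polynomial.X ^ k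
  have hp : p = 0 := Polynomial.zero_of_eval_zero p fun μ => by
    have := congrArg φ (h μ)
    simp only [Finsupp.sum, map_sum, map_smul, smul_eq_mul, map_zero] at this
    simp only [p, Finsupp.sum, Polynomial.eval_finsetSum, Polynomial.eval_mul,
      Polynomial.eval_C, Polynomial.eval_pow, Polynomial.eval_X]
    simpa only [mul_comm] using this
  have hcoeff := congrArg (Polynomial.coeff · n) hp
  simp only [p, Finsupp.sum, Polynomial.finsetSum_coeff, Polynomial.coeff_C_mul_X_pow] at hcoeff
  by_cases h0 : f n = 0 <;> simp_all

theorem Submodule.mem_of_forall_mem_eigenspace_pow {K V : Type*} [Field K] [Infinite K]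
    [AddCommGroup V] [Module K V] (U : ℕ → Submodule K V) (D : K → Module.End K V)
    (hD : ∀ μ n, U n ≤ (D μ).eigenspace (μ ^ n)) {z : V} (hz : z ∈ ⨆ n, U n) {k : ℕ}
    (hzk : ∀ μ, z ∈ (D μ).eigenspace (μ ^ k)) : z ∈ U k := by
  obtain ⟨f, hfU, hfz⟩ := (Submodule.mem_iSup_iff_exists_finsupp U z).1 hz
  have hsum : ∀ μ : K, (f - Finsupp.single k z).sum (fun n v => μ ^ n • v) = 0 := fun μ => by
    have hDz : D μ z = f.sum fun n v => μ ^ n • v := by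
      rw [← hfz, map_finsuppSum]
      exact Finsupp.sum_congr fun n _ => Module.End.mem_eigenspace_iff.1 (hD μ n (hfU n))
    rw [Finsupp.sum_sub_index fun _ _ _ => smul_sub _ _ _,
      Finsupp.sum_single_index (h := fun n v => μ ^ n • v) (smul_zero _), ← hDz,
      Module.End.mem_eigenspace_iff.1 (hzk μ), sub_self]
  have hf := sub_eq_zero.1 (Finsupp.eq_zero_of_forall_sum_pow_smul_eq_zero _ hsum)
  simpa [hf] using hfU k

theorem FreeLieAlgebra.lieSpan_range_of (R X : Type*) [CommRing R] :
    LieSubalgebra.lieSpan R (FreeLieAlgebra R X) (Set.range (of R)) = ⊤ := by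
  set S := LieSubalgebra.lieSpan R (FreeLieAlgebra R X) (Set.range (of R))
  let f : FreeLieAlgebra R X →ₗ⁅R⁆ S :=
    lift R fun x => ⟨of R x, LieSubalgebra.subset_lieSpan ⟨x, rfl⟩⟩
  have hf : S.incl.comp f = LieHom.id := hom_ext fun x => by simp [f]
  refine eq_top_iff.2 fun w _ => ?_
  have hw : S.incl (f w) = w := LieHom.congr_fun hf w
  exact hw ▸ (f w).2

theorem of_mem_span_pair {K : Type*} [Field K] (i : Fin 2) :
    of K i ∈ Submodule.span K ({of K 0, of K 1} : Set (LieW K)) := by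
  apply Submodule.subset_span
  fin_cases i <;> simp

@[simp] theorem lieTau_of {K : Type*} [Field K] (l : K) (i : Fin 2) :
    lieTau K l (of K i) = l • of K i :=
  lift_of_apply _ _

namespace LieEnd

variable {K : Type*} [Field K]

def ofPair (u v : LieW K) : LieEnd K :=
  lift K ![u, v]

@[simp] theorem ofPair_apply_of_zero (u v : LieW K) : ofPair u v (of K 0) = u :=
  lift_of_apply _ _

@[simp] theorem ofPair_apply_of_one (u v : LieW K) : ofPair u v (of K 1) = v :=
  lift_of_apply _ _

theorem ext_of {σ η : LieEnd K} (h₀ : σ (of K 0) = η (of K 0))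
    (h₁ : σ (of K 1) = η (of K 1)) : σ = η :=
  hom_ext fun i => by fin_cases i <;> assumption

theorem mul_ofPair (σ : LieEnd K) (u v : LieW K) : σ * ofPair u v = ofPair (σ u) (σ v) :=
  ext_of (by simp) (by simp)

theorem isLEndo_ofPair {u v : LieW K} (hu : u ∈ Submodule.span K {of K 0, of K 1})
    (hv : v ∈ Submodule.span K {of K 0, of K 1}) : IsLEndo (ofPair u v) := by
  intro i
  fin_cases i <;> simpa

end LieEnd

open LieEnd

def genBracket (K : Type*) [Field K] : LieW K :=
  ⁅(of K 0 : LieW K), (of K 1 : LieW K)⁆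

@[simp] theorem ofPair_apply_genBracket {K : Type*} [Field K] (u v : LieW K) :
    ofPair u v (genBracket K) = ⁅u, v⁆ := by
  simp [genBracket]

attribute [local instance 100] LieRing.ofAssociativeRing in
theorem genBracket_ne_zero {K : Type*} [Field K] : genBracket K ≠ 0 := by
  intro h
  let A : Matrix (Fin 2) (Fin 2) K := Matrix.single 0 1 1
  let B : Matrix (Fin 2) (Fin 2) K := Matrix.single 1 0 1
  have hAB : ⁅A, B⁆ = 0 := by
    have := congrArg (lift K ![A, B]) h
    rwa [genBracket, LieHom.map_lie, lift_of_apply, lift_of_apply, map_zero] at this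
  have := congrFun (congrFun hAB 0) 0
  simp [A, B, LieRing.of_associative_ring_bracket, Matrix.mul_apply, Matrix.single] at this

inductive IsLieMonomial (K : Type*) [Field K] : ℕ → ℕ → LieW K → Prop
  | of_zero : IsLieMonomial K 1 0 (of K 0)
  | of_one : IsLieMonomial K 0 1 (of K 1)
  | lie {a b c d : ℕ} {u v : LieW K} : IsLieMonomial K a b u → IsLieMonomial K c d v →
      IsLieMonomial K (a + c) (b + d) ⁅u, v⁆

namespace IsLieMonomial

variable {K : Type*} [Field K]

theorem pos {a b : ℕ} {m : LieW K} (h : IsLieMonomial K a b m) : 0 < a + b := by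
  induction h <;> omega

theorem eq_of_zero :
    ∀ {a b : ℕ} {m : LieW K}, IsLieMonomial K a b m → a = 1 → b = 0 → m = of K 0
  | _, _, _, of_zero, _, _ => rfl
  | _, _, _, of_one, ha, _ => absurd ha zero_ne_one
  | _, _, _, lie hu hv, _, _ => by have := hu.pos; have := hv.pos; omega

theorem eq_of_one :
    ∀ {a b : ℕ} {m : LieW K}, IsLieMonomial K a b m → a = 0 → b = 1 → m = of K 1
  | _, _, _, of_zero, ha, _ => absurd ha one_ne_zero
  | _, _, _, of_one, _, _ => rfl
  | _, _, _, lie hu hv, _, _ => by have := hu.pos; have := hv.pos; omega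

theorem mem_span_genBracket :
    ∀ {a b : ℕ} {m : LieW K}, IsLieMonomial K a b m → a = 1 → b = 1 →
      m ∈ Submodule.span K {genBracket K}
  | _, _, _, of_zero, _, hb => absurd hb zero_ne_one
  | _, _, _, of_one, ha, _ => absurd ha zero_ne_one
  | _, _, _, @lie _ _ a b c d _ _ hu hv, ha, hb => by
    have := hu.pos; have := hv.pos
    obtain ⟨rfl, rfl, rfl, rfl⟩ | ⟨rfl, rfl, rfl, rfl⟩ :
        (a = 1 ∧ b = 0 ∧ c = 0 ∧ d = 1) ∨ (a = 0 ∧ b = 1 ∧ c = 1 ∧ d = 0) := by omega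
    · rw [hu.eq_of_zero rfl rfl, hv.eq_of_one rfl rfl]
      exact Submodule.mem_span_singleton_self _
    · rw [hu.eq_of_one rfl rfl, hv.eq_of_zero rfl rfl, ← lie_skew (of K 1 : LieW K), genBracket]
      exact Submodule.neg_mem _ (Submodule.mem_span_singleton_self _)

theorem ofPair_smul_apply {a b : ℕ} {m : LieW K} (h : IsLieMonomial K a b m) (μ ν : K) :
    ofPair (μ • of K 0) (ν • of K 1) m = (μ ^ a * ν ^ b) • m := by
  induction h with
  | of_zero => simp
  | of_one => simp
  | lie _ _ ihu ihv =>
    rw [LieHom.map_lie, ihu, ihv, smul_lie, lie_smul, smul_smul]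
    ring_nf

end IsLieMonomial

theorem span_isLieMonomial_eq_top (K : Type*) [Field K] :
    Submodule.span K {m : LieW K | ∃ a b, IsLieMonomial K a b m} = ⊤ := by
  set S := Submodule.span K {m : LieW K | ∃ a b, IsLieMonomial K a b m}
  have hlie : ∀ {u v}, u ∈ S → v ∈ S → ⁅u, v⁆ ∈ S := fun {u v} hu hv => by
    let bracket : LieW K →ₗ[K] LieW K →ₗ[K] LieW K :=
      LinearMap.mk₂ K (fun u v => ⁅u, v⁆) add_lie smul_lie lie_add lie_smul
    have := Submodule.apply_mem_map₂ bracket hu hv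
    rw [Submodule.map₂_span_span] at this
    refine Submodule.span_le.2 ?_ this
    rintro _ ⟨_, ⟨a, b, hm⟩, _, ⟨c, d, hm'⟩, rfl⟩
    exact Submodule.subset_span ⟨_, _, hm.lie hm'⟩
  let S' : LieSubalgebra K (LieW K) := { S with lie_mem' := hlie }
  have hgen : LieSubalgebra.lieSpan K (LieW K) (Set.range (of K)) ≤ S' := by
    rw [LieSubalgebra.lieSpan_le]
    rintro _ ⟨i, rfl⟩
    fin_cases i
    exacts [Submodule.subset_span ⟨_, _, .of_zero⟩, Submodule.subset_span ⟨_, _, .of_one⟩]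
  rw [FreeLieAlgebra.lieSpan_range_of, top_le_iff] at hgen
  exact eq_top_iff.2 fun w _ => (hgen ▸ LieSubalgebra.mem_top w : w ∈ S')

theorem mem_span_genBracket_of_forall_ofPair_smul_apply {K : Type*} [Field K] [Infinite K]
    {z : LieW K} (hz : ∀ μ ν : K, ofPair (μ • of K 0) (ν • of K 1) z = (μ * ν) • z) :
    z ∈ Submodule.span K {genBracket K} := by
  let Dx (μ : K) : Module.End K (LieW K) := (ofPair (μ • of K 0) (1 • of K 1)).toLinearMap
  let Dy (ν : K) : Module.End K (LieW K) := (ofPair (1 • of K 0) (ν • of K 1)).toLinearMap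
  let Uy (b : ℕ) : Submodule K (LieW K) := Submodule.span K {m | ∃ a, IsLieMonomial K a b m}
  let Ux (a : ℕ) : Submodule K (LieW K) := Submodule.span K {m | IsLieMonomial K a 1 m}
  have hz_top : z ∈ ⨆ b, Uy b := by
    have hle : Submodule.span K {m | ∃ a b, IsLieMonomial K a b m} ≤ ⨆ b, Uy b :=
      Submodule.span_le.2 fun m ⟨a, b, hm⟩ =>
        Submodule.mem_iSup_of_mem b (Submodule.subset_span ⟨a, hm⟩)
    exact hle (span_isLieMonomial_eq_top K ▸ Submodule.mem_top)
  have hz_y : z ∈ Uy 1 := by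
    refine Submodule.mem_of_forall_mem_eigenspace_pow Uy Dy (fun ν b => ?_) hz_top fun ν => ?_
    · refine Submodule.span_le.2 fun m ⟨a, hm⟩ => Module.End.mem_eigenspace_iff.2 ?_
      simpa [Dy] using hm.ofPair_smul_apply 1 ν
    · simpa [Dy] using hz 1 ν
  have hz_x : z ∈ ⨆ a, Ux a := by
    refine Submodule.span_le.2 ?_ hz_y
    rintro m ⟨a, hm⟩
    exact Submodule.mem_iSup_of_mem a (Submodule.subset_span hm)
  have hz_xy : z ∈ Ux 1 := by
    refine Submodule.mem_of_forall_mem_eigenspace_pow Ux Dx (fun μ a => ?_) hz_x fun μ => ?_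
    · refine Submodule.span_le.2 fun m hm => Module.End.mem_eigenspace_iff.2 ?_
      simpa [Dx] using IsLieMonomial.ofPair_smul_apply hm μ 1
    · simpa [Dx] using hz μ 1
  exact Submodule.span_le.2 (fun m hm => IsLieMonomial.mem_span_genBracket hm rfl rfl)
    hz_xy

namespace MulAut

variable {K : Type*} [Field K] {T : MulAut (LieEnd K)}

def FixesLEndos (T : MulAut (LieEnd K)) : Prop :=
  ∀ σ : LieEnd K, IsLEndo σ → T σ = σ

def transferMap (T : MulAut (LieEnd K)) (w : LieW K) : LieW K :=
  T (ofPair w 0) (of K 0)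

theorem map_ofPair_zero (hid : T.FixesLEndos) (w : LieW K) :
    T (ofPair w 0) = ofPair (transferMap T w) 0 := by
  have hx : T (ofPair (of K 0) 0) = ofPair (of K 0) 0 :=
    hid _ (isLEndo_ofPair (of_mem_span_pair 0) (Submodule.zero_mem _))
  calc T (ofPair w 0) = T (ofPair w 0 * ofPair (of K 0) 0) := by rw [mul_ofPair]; simp
    _ = ofPair (transferMap T w) 0 := by rw [map_mul, hx, mul_ofPair, map_zero]; rfl

theorem apply_transferMap (hid : T.FixesLEndos) (σ : LieEnd K) (w : LieW K) :
    T σ (transferMap T w) = transferMap T (σ w) := by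
  have h := congrArg T (mul_ofPair σ w 0)
  rw [map_mul, map_zero, map_ofPair_zero hid, map_ofPair_zero hid, mul_ofPair, map_zero] at h
  simpa using LieHom.congr_fun h (of K 0)

theorem transferMap_eq_self_of_mem_span (hid : T.FixesLEndos) {w : LieW K}
    (hw : w ∈ Submodule.span K {of K 0, of K 1}) : transferMap T w = w := by
  rw [transferMap, hid _ (isLEndo_ofPair hw (Submodule.zero_mem _)), ofPair_apply_of_zero]

theorem apply_of (hid : T.FixesLEndos) (σ : LieEnd K) (i : Fin 2) :
    T σ (of K i) = transferMap T (σ (of K i)) := by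
  rw [← apply_transferMap hid, transferMap_eq_self_of_mem_span hid (of_mem_span_pair i)]

theorem transferMap_injective (hid : T.FixesLEndos) :
    Function.Injective (transferMap T) := fun u v h => by
  have hT : T (ofPair u 0) = T (ofPair v 0) := by rw [map_ofPair_zero hid, map_ofPair_zero hid, h]
  simpa using LieHom.congr_fun (T.injective hT) (of K 0)

theorem transferMap_add (hid : T.FixesLEndos) (u v : LieW K) :
    transferMap T (u + v) = transferMap T u + transferMap T v := by
  have hxy : of K 0 + of K 1 ∈ Submodule.span K ({of K 0, of K 1} : Set (LieW K)) :=
    add_mem (of_mem_span_pair 0) (of_mem_span_pair 1)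
  calc transferMap T (u + v) = transferMap T (ofPair u v (of K 0 + of K 1)) := by simp
    _ = T (ofPair u v) (of K 0) + T (ofPair u v) (of K 1) := by
      rw [← apply_transferMap hid, transferMap_eq_self_of_mem_span hid hxy, map_add]
    _ = transferMap T u + transferMap T v := by simp [apply_of hid]

theorem transferMap_smul (hid : T.FixesLEndos) (c : K) (u : LieW K) :
    transferMap T (c • u) = c • transferMap T u := by
  calc transferMap T (c • u) = transferMap T (ofPair u 0 (c • of K 0)) := by simp
    _ = c • T (ofPair u 0) (of K 0) := by
      rw [← apply_transferMap hid,
        transferMap_eq_self_of_mem_span hid (Submodule.smul_mem _ c (of_mem_span_pair 0)), map_smul]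
    _ = c • transferMap T u := by simp [apply_of hid]

theorem transferMap_lie (hid : T.FixesLEndos) {c : K}
    (hc : transferMap T (genBracket K) = c • genBracket K) (u v : LieW K) :
    transferMap T ⁅u, v⁆ = c • ⁅transferMap T u, transferMap T v⁆ := by
  calc transferMap T ⁅u, v⁆ = transferMap T (ofPair u v (genBracket K)) := by simp
    _ = c • ⁅T (ofPair u v) (of K 0), T (ofPair u v) (of K 1)⁆ := by
      rw [← apply_transferMap hid, hc, map_smul, genBracket, LieHom.map_lie]
    _ = c • ⁅transferMap T u, transferMap T v⁆ := by simp [apply_of hid]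

theorem exists_transferMap_genBracket_eq_smul [Infinite K] (hid : T.FixesLEndos) :
    ∃ c : K, transferMap T (genBracket K) = c • genBracket K := by
  refine (Submodule.mem_span_singleton.1 <|
    mem_span_genBracket_of_forall_ofPair_smul_apply fun μ ν => ?_).imp fun _ => Eq.symm
  have hL : IsLEndo (ofPair (μ • of K 0) (ν • of K 1)) :=
    isLEndo_ofPair (Submodule.smul_mem _ μ (of_mem_span_pair 0))
      (Submodule.smul_mem _ ν (of_mem_span_pair 1))
  rw [← hid _ hL, apply_transferMap hid, ofPair_apply_genBracket, smul_lie, lie_smul, smul_smul,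
    ← genBracket, transferMap_smul hid]

theorem ne_zero_of_transferMap_genBracket_eq_smul (hid : T.FixesLEndos) {c : K}
    (hc : transferMap T (genBracket K) = c • genBracket K) : c ≠ 0 := by
  rintro rfl
  refine genBracket_ne_zero (transferMap_injective hid ?_)
  rw [hc, zero_smul, transferMap_eq_self_of_mem_span hid (Submodule.zero_mem _)]

theorem transferMap_eq_smul_lieTau (hid : T.FixesLEndos) {c : K}
    (hc : transferMap T (genBracket K) = c • genBracket K)
    (w : LieW K) : transferMap T w = c⁻¹ • lieTau K c w := by
  have hc0 := ne_zero_of_transferMap_genBracket_eq_smul hid hc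
  let h : LieEnd K :=
    { toFun := fun w => c • transferMap T w
      map_add' := fun u v => by simp only [transferMap_add hid, smul_add]
      map_smul' := fun a u => by simp only [transferMap_smul hid, RingHom.id_apply, smul_comm c a]
      map_lie' := fun {u v} => by
        simp only [transferMap_lie hid hc, smul_lie, lie_smul, smul_smul] }
  have hh : h = lieTau K c := hom_ext fun i => by
    simp [h, transferMap_eq_self_of_mem_span hid (of_mem_span_pair i)]
  rw [← hh]
  exact (inv_smul_smul₀ hc0 _).symm

end MulAut

open MulAut

theorem characteristic_aut_fixing_LEndos_is_conjugation_general (K : Type*) [Field K] [Infinite K]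
    (T : MulAut (LieEnd K))
    (hid : ∀ σ : LieEnd K, IsLEndo σ → T σ = σ) :
    ∃ l : K, l ≠ 0 ∧ ∀ σ : LieEnd K,
      T σ = (lieTau K l⁻¹).comp (σ.comp (lieTau K l)) := by
  obtain ⟨c, hc⟩ := exists_transferMap_genBracket_eq_smul hid
  refine ⟨c⁻¹, inv_ne_zero (ne_zero_of_transferMap_genBracket_eq_smul hid hc), fun σ => ?_⟩
  refine hom_ext fun i => ?_
  rw [apply_of hid, transferMap_eq_smul_lieTau hid hc]
  simp

/-- Over an infinite field, if a characteristic automorphism `T` of the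
endomorphism monoid of the free Lie algebra on two generators acts identically on the subsemigroup
of `L`-endomorphisms, then there is `λ ≠ 0` in `K` with `T σ = τ_λ⁻¹ ∘ σ ∘ τ_λ` for every
endomorphism `σ`. -/
theorem characteristic_aut_fixing_LEndos_is_conjugation (K : Type*) [Field K] [Infinite K]
    (T : MulAut (LieEnd K)) (hT : IsCharacteristic T)
    (hid : ∀ σ : LieEnd K, IsLEndo σ → T σ = σ) :
    ∃ l : K, l ≠ 0 ∧ ∀ σ : LieEnd K,
      T σ = (lieTau K l⁻¹).comp (σ.comp (lieTau K l)) :=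
  characteristic_aut_fixing_LEndos_is_conjugation_general K T hid
end
end
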